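/- Let ω ∈ ℕ and let w : ℝ^d → ℂ be smooth with w(0) ≠ 0. Then for every smooth function f : ℝ^d → ℂ and every x ∈ ℝ^d, (W_ω^w f)(x) = f(x) − Σ_{|α| ≤ ω} (x^α/α!) (V_{ω−|α|} w)(x) · ∂^α f(0). -/

import Mathlib

noncomputable section

/-- Partial derivative `∂_i` of a complex-valued function on `ℝ^d = (Fin d → ℝ)`. -/
def pd {d : ℕ} (i : Fin d) (f : (Fin d → ℝ) → ℂ) : (Fin d → ℝ) → ℂ :=
  fun x => fderiv ℝ f x (Pi.single i 1)

/-- Multi-index partial derivative `∂^α = ∏_i ∂_i^{α_i}`. -/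
def mpd {d : ℕ} (α : Fin d → ℕ) (f : (Fin d → ℝ) → ℂ) : (Fin d → ℝ) → ℂ :=
  Fin.foldr d (fun i g => (pd i)^[α i] g) f

/-- Monomial `x^α = ∏_i x_i^{α_i}`. -/
def mono {d : ℕ} (α : Fin d → ℕ) (x : Fin d → ℝ) : ℂ := ∏ i, (x i : ℂ) ^ α i

/-- Multi-index factorial `α! = ∏_i α_i!`. -/
def mfact {d : ℕ} (α : Fin d → ℕ) : ℕ := ∏ i, Nat.factorial (α i)

/-- Order `|α| = Σ_i α_i` of a multi-index. -/
def morder {d : ℕ} (α : Fin d → ℕ) : ℕ := ∑ i, α i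

/-- The finite set of multi-indices `α` with `|α| ≤ ω`. -/
def midx (d ω : ℕ) : Finset (Fin d → ℕ) :=
  (Fintype.piFinset fun _ : Fin d => Finset.range (ω + 1)).filter fun α => morder α ≤ ω

/-- The subtraction operator
`(W_ω^w f)(x) = f(x) − w(x) Σ_{|α| ≤ ω} (x^α/α!) ∂^α(f/w)(0)`. -/
def Wop {d : ℕ} (ω : ℕ) (w f : (Fin d → ℝ) → ℂ) : (Fin d → ℝ) → ℂ :=
  fun x => f x - w x * ∑ α ∈ midx d ω, mono α x / (mfact α : ℂ) * mpd α (fun y => f y / w y) 0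


/-- The `V`-operation `(V_k w)(x) = w(x) Σ_{|μ| ≤ k} (x^μ/μ!) ∂^μ(1/w)(0)`. -/
def Vop {d : ℕ} (k : ℕ) (w : (Fin d → ℝ) → ℂ) : (Fin d → ℝ) → ℂ :=
  fun x => w x * ∑ μ ∈ midx d k, mono μ x / (mfact μ : ℂ) * mpd μ (fun y => (w y)⁻¹) 0


open Finset

variable {d : ℕ} {U : Set (Fin d → ℝ)} {F G : (Fin d → ℝ) → ℂ}

theorem pd_contDiffOn (hU : IsOpen U) (i : Fin d) (hF : ContDiffOn ℝ (⊤ : ℕ∞) F U) :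
    ContDiffOn ℝ (⊤ : ℕ∞) (pd i F) U := by
  have h1 : ContDiffOn ℝ (⊤ : ℕ∞) (fderiv ℝ F) U := hF.fderiv_of_isOpen hU (by simp)
  exact (ContinuousLinearMap.apply ℝ ℂ (Pi.single i 1 : Fin d → ℝ)).contDiff.comp_contDiffOn h1

theorem iter_pd_contDiffOn (hU : IsOpen U) (i : Fin d) (n : ℕ) (hF : ContDiffOn ℝ (⊤ : ℕ∞) F U) :
    ContDiffOn ℝ (⊤ : ℕ∞) ((pd i)^[n] F) U := by
  induction n with
  | zero => exact hF
  | succ n ih => rw [Function.iterate_succ_apply']; exact pd_contDiffOn hU i ih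

theorem pd_congrOn (hU : IsOpen U) (i : Fin d) (h : ∀ y ∈ U, F y = G y)
    {x : Fin d → ℝ} (hx : x ∈ U) : pd i F x = pd i G x := by
  have he : F =ᶠ[nhds x] G := Filter.eventuallyEq_of_mem (hU.mem_nhds hx) h
  simp only [pd, he.fderiv_eq]

theorem iter_pd_congrOn (hU : IsOpen U) (i : Fin d) (n : ℕ) (h : ∀ y ∈ U, F y = G y)
    {x : Fin d → ℝ} (hx : x ∈ U) : (pd i)^[n] F x = (pd i)^[n] G x := by
  induction n generalizing x with
  | zero => exact h x hx
  | succ n ih =>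
    rw [Function.iterate_succ_apply', Function.iterate_succ_apply']
    exact pd_congrOn hU i (fun y hy => ih hy) hx

theorem pd_mul {x : Fin d → ℝ} (i : Fin d) (hF : DifferentiableAt ℝ F x)
    (hG : DifferentiableAt ℝ G x) :
    pd i (fun y => F y * G y) x = pd i F x * G x + F x * pd i G x := by
  simp only [pd, fderiv_fun_mul hF hG, ContinuousLinearMap.add_apply,
    ContinuousLinearMap.smul_apply, smul_eq_mul]
  ring

theorem pd_sum {ι : Type*} {s : Finset ι} {A : ι → (Fin d → ℝ) → ℂ} {x : Fin d → ℝ} (i : Fin d)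
    (h : ∀ t ∈ s, DifferentiableAt ℝ (A t) x) :
    pd i (fun y => ∑ t ∈ s, A t y) x = ∑ t ∈ s, pd i (A t) x := by
  simp only [pd, fderiv_fun_sum h, ContinuousLinearMap.sum_apply]

theorem pd_const_mul {x : Fin d → ℝ} (i : Fin d) (c : ℂ) (hF : DifferentiableAt ℝ F x) :
    pd i (fun y => c * F y) x = c * pd i F x := by
  simp only [pd, fderiv_const_mul hF, ContinuousLinearMap.smul_apply, smul_eq_mul]


theorem pascal_sum (F G : ℕ → ℂ) (n : ℕ) :
    ∑ k ∈ range (n+2), (Nat.choose (n+1) k : ℂ) * F k * G (n+1-k)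
    = ∑ k ∈ range (n+1), (n.choose k : ℂ) * F (k+1) * G (n-k)
      + ∑ k ∈ range (n+1), (n.choose k : ℂ) * F k * G (n+1-k) := by
  rw [Finset.sum_range_succ' _ (n+1)]
  have h1 : ∀ k ∈ range (n+1), ((n+1).choose (k+1) : ℂ) * F (k+1) * G (n+1-(k+1))
      = (n.choose k : ℂ) * F (k+1) * G (n-k) + (n.choose (k+1) : ℂ) * F (k+1) * G (n-k) := by
    intro k hk
    rw [Nat.choose_succ_succ]
    push_cast
    ring
  rw [Finset.sum_congr rfl h1, Finset.sum_add_distrib]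
  have h2 : ∑ k ∈ range (n+1), (n.choose (k+1) : ℂ) * F (k+1) * G (n-k)
      + ((n+1).choose 0 : ℂ) * F 0 * G (n+1-0)
      = ∑ k ∈ range (n+1), (n.choose k : ℂ) * F k * G (n+1-k) := by
    have h3 : ∑ k ∈ range (n+2), (n.choose k : ℂ) * F k * G (n+1-k)
        = ∑ k ∈ range (n+1), (n.choose (k+1) : ℂ) * F (k+1) * G (n+1-(k+1))
          + (n.choose 0 : ℂ) * F 0 * G (n+1-0) := Finset.sum_range_succ' _ (n+1)
    have h4 : ∑ k ∈ range (n+1), (n.choose (k+1) : ℂ) * F (k+1) * G (n+1-(k+1))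
        = ∑ k ∈ range (n+1), (n.choose (k+1) : ℂ) * F (k+1) * G (n-k) :=
      Finset.sum_congr rfl fun k hk => by
        have : n + 1 - (k+1) = n - k := by omega
        rw [this]
    rw [h4] at h3
    rw [Finset.sum_range_succ] at h3
    simp only [Nat.choose_succ_self, Nat.cast_zero, zero_mul, add_zero, Nat.choose_zero_right,
      Nat.cast_one] at h3 ⊢
    rw [← h3]
  rw [add_assoc, h2]

theorem diffAt_of_contDiffOn (hU : IsOpen U) {x : Fin d → ℝ} (hx : x ∈ U)
    (hF : ContDiffOn ℝ (⊤ : ℕ∞) F U) : DifferentiableAt ℝ F x :=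
  (hF.differentiableOn (by simp)).differentiableAt (hU.mem_nhds hx)

theorem iter_pd_mul (hU : IsOpen U) (i : Fin d) (hF : ContDiffOn ℝ (⊤ : ℕ∞) F U)
    (hG : ContDiffOn ℝ (⊤ : ℕ∞) G U) (n : ℕ) :
    ∀ x ∈ U, (pd i)^[n] (fun y => F y * G y) x
      = ∑ k ∈ range (n+1), (n.choose k : ℂ) * (pd i)^[k] F x * (pd i)^[n-k] G x := by
  induction n with
  | zero => intro x hx; simp
  | succ n ih =>
    intro x hx
    have hdF : ∀ k, DifferentiableAt ℝ ((pd i)^[k] F) x :=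
      fun k => diffAt_of_contDiffOn hU hx (iter_pd_contDiffOn hU i k hF)
    have hdG : ∀ k, DifferentiableAt ℝ ((pd i)^[k] G) x :=
      fun k => diffAt_of_contDiffOn hU hx (iter_pd_contDiffOn hU i k hG)
    rw [Function.iterate_succ_apply']
    rw [pd_congrOn hU i ih hx]
    rw [pd_sum (A := fun k y => (n.choose k : ℂ) * (pd i)^[k] F y * (pd i)^[n-k] G y) i (fun k _ => ((differentiableAt_const _).mul (hdF k)).mul (hdG (n-k)))]
    have hterm : ∀ k ∈ range (n+1),
        pd i (fun y => (n.choose k : ℂ) * (pd i)^[k] F y * (pd i)^[n-k] G y) x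
        = (n.choose k : ℂ) * (pd i)^[k+1] F x * (pd i)^[n-k] G x
          + (n.choose k : ℂ) * (pd i)^[k] F x * (pd i)^[n-k+1] G x := by
      intro k _
      have := pd_mul (F := fun y => (n.choose k : ℂ) * (pd i)^[k] F y)
        (G := (pd i)^[n-k] G) (x := x) i ((differentiableAt_const _).mul (hdF k)) (hdG (n-k))
      rw [this]
      have h2 : pd i (fun y => (n.choose k : ℂ) * (pd i)^[k] F y) x
          = (n.choose k : ℂ) * pd i ((pd i)^[k] F) x := by
        simp only [pd, fderiv_const_mul (hdF k), ContinuousLinearMap.smul_apply, smul_eq_mul]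
      rw [h2, ← Function.iterate_succ_apply' (pd i) k F, ← Function.iterate_succ_apply' (pd i) (n-k) G]
    rw [Finset.sum_congr rfl hterm, Finset.sum_add_distrib]
    have hp := pascal_sum (fun k => (pd i)^[k] F x) (fun k => (pd i)^[k] G x) n
    have hr : ∀ k ∈ range (n+1), (n.choose k : ℂ) * (pd i)^[k] F x * (pd i)^[n-k+1] G x
        = (n.choose k : ℂ) * (pd i)^[k] F x * (pd i)^[n+1-k] G x := by
      intro k hk
      simp only [mem_range] at hk
      have : n - k + 1 = n + 1 - k := by omega
      rw [this]
    rw [Finset.sum_congr rfl hr]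
    rw [show n + 1 + 1 = n + 2 from rfl, hp]

/-! mpdL machinery -/

def mpdL {d : ℕ} (l : List (Fin d)) (α : Fin d → ℕ) (f : (Fin d → ℝ) → ℂ) : (Fin d → ℝ) → ℂ :=
  l.foldr (fun i g => (pd i)^[α i] g) f

theorem mpd_eq_mpdL (α : Fin d → ℕ) (f : (Fin d → ℝ) → ℂ) :
    mpd α f = mpdL (List.finRange d) α f :=
  Fin.foldr_eq_foldr_finRange _ _

theorem mpdL_nil (α : Fin d → ℕ) (f : (Fin d → ℝ) → ℂ) : mpdL [] α f = f := rfl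

theorem mpdL_cons (i : Fin d) (l : List (Fin d)) (α : Fin d → ℕ) (f : (Fin d → ℝ) → ℂ) :
    mpdL (i :: l) α f = (pd i)^[α i] (mpdL l α f) := rfl

theorem mpdL_contDiffOn (hU : IsOpen U) (l : List (Fin d)) (α : Fin d → ℕ)
    (hF : ContDiffOn ℝ (⊤ : ℕ∞) F U) : ContDiffOn ℝ (⊤ : ℕ∞) (mpdL l α F) U := by
  induction l with
  | nil => exact hF
  | cons i l ih => exact iter_pd_contDiffOn hU i (α i) ih

theorem mpdL_congr_idx (l : List (Fin d)) {α β : Fin d → ℕ} (h : ∀ j ∈ l, α j = β j)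
    (f : (Fin d → ℝ) → ℂ) : mpdL l α f = mpdL l β f := by
  induction l with
  | nil => rfl
  | cons i l ih =>
    rw [mpdL_cons, mpdL_cons, h i (List.mem_cons_self),
      ih (fun j hj => h j (List.mem_cons_of_mem i hj))]

theorem mpdL_congrOn (hU : IsOpen U) (l : List (Fin d)) (α : Fin d → ℕ)
    (h : ∀ y ∈ U, F y = G y) {x : Fin d → ℝ} (hx : x ∈ U) : mpdL l α F x = mpdL l α G x := by
  induction l generalizing x with
  | nil => exact h x hx
  | cons i l ih => exact iter_pd_congrOn hU i (α i) (fun y hy => ih hy) hx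

theorem iter_pd_sum_on {ι : Type*} (hU : IsOpen U) (i : Fin d) (m : ℕ) {s : Finset ι}
    (c : ι → ℂ) (h : ι → (Fin d → ℝ) → ℂ) (hh : ∀ t ∈ s, ContDiffOn ℝ (⊤ : ℕ∞) (h t) U) :
    ∀ x ∈ U, (pd i)^[m] (fun y => ∑ t ∈ s, c t * h t y) x
      = ∑ t ∈ s, c t * (pd i)^[m] (h t) x := by
  induction m with
  | zero => intro x hx; rfl
  | succ m ih =>
    intro x hx
    rw [Function.iterate_succ_apply', pd_congrOn hU i ih hx,
      pd_sum (A := fun t y => c t * (pd i)^[m] (h t) y) i (fun t ht => (differentiableAt_const _).mul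
        (diffAt_of_contDiffOn hU hx (iter_pd_contDiffOn hU i m (hh t ht))))]
    refine Finset.sum_congr rfl fun t ht => ?_
    have hd := diffAt_of_contDiffOn hU hx (iter_pd_contDiffOn hU i m (hh t ht))
    have : pd i (fun y => c t * (pd i)^[m] (h t) y) x = c t * pd i ((pd i)^[m] (h t)) x := by
      simp only [pd, fderiv_const_mul hd, ContinuousLinearMap.smul_apply, smul_eq_mul]
    rw [this, ← Function.iterate_succ_apply' (pd i) m (h t)]

/-! decomposition sets and multinomial coefficients -/

def mchoose {d : ℕ} (γ α : Fin d → ℕ) : ℕ := ∏ i, (γ i).choose (α i)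

def decs {d : ℕ} (l : List (Fin d)) (γ : Fin d → ℕ) : Finset (Fin d → ℕ) :=
  (Fintype.piFinset fun i => Finset.range (γ i + 1)).filter fun α => ∀ i, i ∉ l → α i = 0

theorem mem_decs {l : List (Fin d)} {γ α : Fin d → ℕ} :
    α ∈ decs l γ ↔ (∀ i, α i ≤ γ i) ∧ (∀ i, i ∉ l → α i = 0) := by
  simp [decs, Fintype.mem_piFinset, Nat.lt_succ_iff]

theorem decs_nil (γ : Fin d → ℕ) : decs ([] : List (Fin d)) γ = {fun _ => 0} := by
  ext α
  rw [mem_decs, Finset.mem_singleton]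
  constructor
  · rintro ⟨-, h2⟩; funext j; exact h2 j (by simp)
  · rintro rfl; exact ⟨fun i => Nat.zero_le _, fun i _ => rfl⟩

theorem mchoose_update (γ β : Fin d → ℕ) (i : Fin d) (hβ : β i = 0) (k : ℕ) :
    mchoose γ (Function.update β i k) = (γ i).choose k * mchoose γ β := by
  unfold mchoose
  have h1 : ∏ j, (γ j).choose (Function.update β i k j)
      = ∏ j, Function.update (fun j => (γ j).choose (β j)) i ((γ i).choose k) j := by
    refine Finset.prod_congr rfl fun j _ => ?_
    rcases eq_or_ne j i with rfl | h
    · simp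
    · simp [Function.update_of_ne h]
  rw [h1, Finset.prod_update_of_mem (Finset.mem_univ i)]
  have h2 : ∏ j, (γ j).choose (β j)
      = (γ i).choose (β i) * ∏ j ∈ Finset.univ.erase i, (γ j).choose (β j) :=
    (Finset.mul_prod_erase _ _ (Finset.mem_univ i)).symm
  rw [h2, hβ, Nat.choose_zero_right, one_mul, Finset.erase_eq]

theorem iter_pd_mpdL_F (i : Fin d) (l : List (Fin d)) (hil : i ∉ l) (β : Fin d → ℕ) (k : ℕ)
    (f : (Fin d → ℝ) → ℂ) :
    (pd i)^[k] (mpdL l β f) = mpdL (i :: l) (Function.update β i k) f := by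
  rw [mpdL_cons, Function.update_self,
    mpdL_congr_idx l (fun j hj => (Function.update_of_ne (show j ≠ i from fun h => hil (by rw [← h]; exact hj)) k β).symm) f]

theorem iter_pd_mpdL_G (i : Fin d) (l : List (Fin d)) (hil : i ∉ l) (γ β : Fin d → ℕ) (k : ℕ)
    (g : (Fin d → ℝ) → ℂ) :
    (pd i)^[γ i - k] (mpdL l (γ - β) g)
      = mpdL (i :: l) (γ - Function.update β i k) g := by
  rw [mpdL_cons]
  have h1 : (γ - Function.update β i k) i = γ i - k := by
    simp [Pi.sub_apply]
  rw [h1]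
  congr 1
  refine mpdL_congr_idx l (fun j hj => ?_) g
  have hji : j ≠ i := fun h => hil (h ▸ hj)
  simp [Pi.sub_apply, Function.update_of_ne hji]

theorem mpdL_mul (hU : IsOpen U) (hF : ContDiffOn ℝ (⊤ : ℕ∞) F U)
    (hG : ContDiffOn ℝ (⊤ : ℕ∞) G U) :
    ∀ l : List (Fin d), l.Nodup → ∀ γ : Fin d → ℕ, ∀ x ∈ U,
      mpdL l γ (fun y => F y * G y) x
        = ∑ α ∈ decs l γ, (mchoose γ α : ℂ) * mpdL l α F x * mpdL l (γ - α) G x := by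
  intro l
  induction l with
  | nil =>
    intro _ γ x hx
    rw [decs_nil, Finset.sum_singleton]
    simp [mpdL_nil, mchoose]
  | cons i l ih =>
    intro hnd γ x hx
    obtain ⟨hil, hlnd⟩ := List.nodup_cons.mp hnd
    rw [mpdL_cons]
    have h1 : ∀ y ∈ U, mpdL l γ (fun z => F z * G z) y
        = ∑ β ∈ decs l γ, (mchoose γ β : ℂ) * (fun z => mpdL l β F z * mpdL l (γ - β) G z) y := by
      intro y hy
      rw [ih hlnd γ y hy]
      simp only [mul_assoc]
    rw [iter_pd_congrOn hU i (γ i) h1 hx,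
      iter_pd_sum_on hU i (γ i) _ _
        (fun β _ => (mpdL_contDiffOn hU l β hF).mul (mpdL_contDiffOn hU l (γ - β) hG)) x hx]
    have h3 : ∀ β ∈ decs l γ, (mchoose γ β : ℂ)
          * (pd i)^[γ i] (fun z => mpdL l β F z * mpdL l (γ - β) G z) x
        = ∑ k ∈ range (γ i + 1), (mchoose γ β : ℂ) * (((γ i).choose k : ℂ)
            * (pd i)^[k] (mpdL l β F) x * (pd i)^[γ i - k] (mpdL l (γ - β) G) x) := by
      intro β _
      rw [iter_pd_mul hU i (mpdL_contDiffOn hU l β hF) (mpdL_contDiffOn hU l (γ - β) hG)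
        (γ i) x hx, Finset.mul_sum]
    rw [Finset.sum_congr rfl h3, Finset.sum_sigma']
    refine Finset.sum_nbij' (fun p => Function.update p.1 i p.2)
      (fun α => ⟨Function.update α i 0, α i⟩) ?_ ?_ ?_ ?_ ?_
    · rintro ⟨β, k⟩ hp
      dsimp only
      rw [Finset.mem_sigma] at hp
      obtain ⟨hβ, hk⟩ := hp
      rw [mem_decs] at hβ ⊢
      rw [Finset.mem_range, Nat.lt_succ_iff] at hk
      constructor
      · intro j
        rcases eq_or_ne j i with rfl | h
        · simpa using hk
        · simpa [Function.update_of_ne h] using hβ.1 j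
      · intro j hj
        have hji : j ≠ i := fun h => hj (by rw [h]; exact List.mem_cons_self)
        rw [Function.update_of_ne hji]
        exact hβ.2 j (fun h => hj (List.mem_cons_of_mem i h))
    · intro α hα
      rw [mem_decs] at hα
      rw [Finset.mem_sigma]
      dsimp only
      constructor
      · rw [mem_decs]
        constructor
        · intro j
          rcases eq_or_ne j i with rfl | h
          · simp
          · simpa [Function.update_of_ne h] using hα.1 j
        · intro j hj
          rcases eq_or_ne j i with rfl | h
          · simp
          · rw [Function.update_of_ne h]
            exact hα.2 j (by simp [List.mem_cons, h, hj])
      · rw [Finset.mem_range, Nat.lt_succ_iff]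
        exact hα.1 i
    · rintro ⟨β, k⟩ hp
      rw [Finset.mem_sigma] at hp
      have hβ0 : β i = 0 := (mem_decs.mp hp.1).2 i hil
      have e1 : Function.update (Function.update β i k) i 0 = β := by
        funext j
        rcases eq_or_ne j i with rfl | h
        · simp [hβ0]
        · simp [Function.update_of_ne h]
      simp [e1]
    · intro α hα
      funext j
      rcases eq_or_ne j i with rfl | h
      · simp
      · simp [Function.update_of_ne h]
    · rintro ⟨β, k⟩ hp
      rw [Finset.mem_sigma] at hp
      have hβ0 : β i = 0 := (mem_decs.mp hp.1).2 i hil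
      rw [iter_pd_mpdL_F i l hil β k F, iter_pd_mpdL_G i l hil γ β k G,
        mchoose_update γ β i hβ0 k]
      push_cast
      ring

/-! ### small combinatorial lemmas -/

theorem mem_midx {d ω : ℕ} {α : Fin d → ℕ} :
    α ∈ midx d ω ↔ (∀ i, α i ≤ ω) ∧ morder α ≤ ω := by
  simp [midx, Fintype.mem_piFinset, Nat.lt_succ_iff]

theorem le_morder {α : Fin d → ℕ} (i : Fin d) : α i ≤ morder α :=
  Finset.single_le_sum (fun j _ => Nat.zero_le (α j)) (Finset.mem_univ i)

theorem mem_midx_of {ω : ℕ} {α : Fin d → ℕ} (h : morder α ≤ ω) : α ∈ midx d ω :=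
  mem_midx.mpr ⟨fun i => (le_morder i).trans h, h⟩

theorem morder_add (α μ : Fin d → ℕ) : morder (α + μ) = morder α + morder μ := by
  simp [morder, Finset.sum_add_distrib]

theorem morder_sub_add {α γ : Fin d → ℕ} (h : ∀ i, α i ≤ γ i) :
    morder α + morder (γ - α) = morder γ := by
  rw [morder, morder, morder, ← Finset.sum_add_distrib]
  exact Finset.sum_congr rfl fun i _ => Nat.add_sub_cancel' (h i)

theorem mono_add (α μ : Fin d → ℕ) (x : Fin d → ℝ) :
    mono (α + μ) x = mono α x * mono μ x := by
  simp [mono, pow_add, Finset.prod_mul_distrib]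

theorem mfact_decomp (α μ : Fin d → ℕ) :
    mfact (α + μ) = mchoose (α + μ) α * mfact α * mfact μ := by
  rw [mchoose, mfact, mfact, mfact, ← Finset.prod_mul_distrib, ← Finset.prod_mul_distrib]
  refine Finset.prod_congr rfl fun i _ => ?_
  simp only [Pi.add_apply]
  rw [Nat.choose_symm_add]
  exact (Nat.add_choose_mul_factorial_mul_factorial (α i) (μ i)).symm

theorem mfact_ne_zero (α : Fin d → ℕ) : (mfact α : ℂ) ≠ 0 := by
  rw [mfact]
  push_cast
  exact Finset.prod_ne_zero_iff.mpr fun i _ => by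
    exact_mod_cast Nat.cast_ne_zero.mpr (Nat.factorial_ne_zero (α i))

theorem mchoose_ne_zero {γ α : Fin d → ℕ} (h : ∀ i, α i ≤ γ i) : (mchoose γ α : ℂ) ≠ 0 := by
  have hpos : 0 < mchoose γ α := Finset.prod_pos fun i _ => Nat.choose_pos (h i)
  exact Nat.cast_ne_zero.mpr hpos.ne'


/-- Rewriting of the subtraction operator through the `V`-operation:
`(W_ω^w f)(x) = f(x) − Σ_{|α| ≤ ω} (x^α/α!) (V_{ω−|α|} w)(x) ∂^α f(0)`. -/
theorem W_eq_V_subtraction {d : ℕ} (ω : ℕ) (w f : (Fin d → ℝ) → ℂ)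
    (hw : ContDiff ℝ (⊤ : ℕ∞) w) (hw0 : w 0 ≠ 0) (hf : ContDiff ℝ (⊤ : ℕ∞) f) :
    ∀ x : Fin d → ℝ,
      Wop ω w f x =
        f x - ∑ α ∈ midx d ω,
          mono α x / (mfact α : ℂ) * Vop (ω - morder α) w x * mpd α f 0 := by
  intro x
  set U : Set (Fin d → ℝ) := {y | w y ≠ 0} with hUdef
  have hUo : IsOpen U := by
    have : U = w ⁻¹' {0}ᶜ := by ext y; simp [hUdef]
    rw [this]
    exact isOpen_compl_singleton.preimage hw.continuous
  have h0 : (0 : Fin d → ℝ) ∈ U := hw0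
  have hw' : ContDiffOn ℝ (⊤ : ℕ∞) w U := (hw.of_le (by simp)).contDiffOn
  have hf' : ContDiffOn ℝ (⊤ : ℕ∞) f U := (hf.of_le (by simp)).contDiffOn
  have hinv : ContDiffOn ℝ (⊤ : ℕ∞) (fun y => (w y)⁻¹) U := hw'.inv (fun y hy => hy)
  have key : ∀ γ : Fin d → ℕ, mpd γ (fun y => f y / w y) 0
      = ∑ α ∈ decs (List.finRange d) γ,
          (mchoose γ α : ℂ) * mpd α f 0 * mpd (γ - α) (fun y => (w y)⁻¹) 0 := by
    intro γ
    have hdiv : (fun y => f y / w y) = fun y => f y * (w y)⁻¹ :=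
      funext fun y => div_eq_mul_inv _ _
    rw [hdiv, mpd_eq_mpdL,
      mpdL_mul hUo hf' hinv (List.finRange d) (List.nodup_finRange d) γ 0 h0]
    exact Finset.sum_congr rfl fun α _ => by rw [← mpd_eq_mpdL, ← mpd_eq_mpdL]
  show f x - w x * ∑ α ∈ midx d ω, mono α x / (mfact α : ℂ) * mpd α (fun y => f y / w y) 0 = _
  congr 1
  calc w x * ∑ γ ∈ midx d ω, mono γ x / (mfact γ : ℂ) * mpd γ (fun y => f y / w y) 0
      = ∑ γ ∈ midx d ω, ∑ α ∈ decs (List.finRange d) γ,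
          w x * (mono γ x / (mfact γ : ℂ) * ((mchoose γ α : ℂ) * mpd α f 0
            * mpd (γ - α) (fun y => (w y)⁻¹) 0)) := by
        rw [Finset.mul_sum]
        refine Finset.sum_congr rfl fun γ _ => ?_
        rw [key γ, Finset.mul_sum, Finset.mul_sum]
    _ = ∑ p ∈ (midx d ω).sigma (fun γ => decs (List.finRange d) γ),
          w x * (mono p.1 x / (mfact p.1 : ℂ) * ((mchoose p.1 p.2 : ℂ) * mpd p.2 f 0
            * mpd (p.1 - p.2) (fun y => (w y)⁻¹) 0)) := Finset.sum_sigma' _ _ _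
    _ = ∑ q ∈ (midx d ω).sigma (fun α => midx d (ω - morder α)),
          mono q.1 x / (mfact q.1 : ℂ)
            * (w x * (mono q.2 x / (mfact q.2 : ℂ) * mpd q.2 (fun y => (w y)⁻¹) 0))
            * mpd q.1 f 0 := by
        refine Finset.sum_nbij' (fun p => ⟨p.2, p.1 - p.2⟩) (fun q => ⟨q.1 + q.2, q.1⟩)
          ?_ ?_ ?_ ?_ ?_
        · rintro ⟨γ, α⟩ hp
          dsimp only at hp ⊢
          rw [Finset.mem_sigma] at hp ⊢
          dsimp only at hp ⊢
          obtain ⟨hγ, hα⟩ := hp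
          have hle : ∀ i, α i ≤ γ i := (mem_decs.mp hα).1
          have hmγ : morder γ ≤ ω := (mem_midx.mp hγ).2
          have hsum := morder_sub_add hle
          constructor
          · exact mem_midx_of (by omega)
          · exact mem_midx_of (by omega)
        · rintro ⟨α, μ⟩ hq
          dsimp only at hq ⊢
          rw [Finset.mem_sigma] at hq ⊢
          dsimp only at hq ⊢
          obtain ⟨hα, hμ⟩ := hq
          have hmα : morder α ≤ ω := (mem_midx.mp hα).2
          have hmμ : morder μ ≤ ω - morder α := (mem_midx.mp hμ).2
          constructor
          · exact mem_midx_of (by rw [morder_add]; omega)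
          · rw [mem_decs]
            exact ⟨fun i => by simp, fun i hi => absurd (List.mem_finRange i) hi⟩
        · rintro ⟨γ, α⟩ hp
          rw [Finset.mem_sigma] at hp
          have hle : ∀ i, α i ≤ γ i := (mem_decs.mp hp.2).1
          have h1 : α + (γ - α) = γ := by
            funext i
            have := hle i
            simp only [Pi.add_apply, Pi.sub_apply]
            omega
          dsimp only
          simp [h1]
        · rintro ⟨α, μ⟩ hq
          have h1 : α + μ - α = μ := by
            funext i
            simp only [Pi.add_apply, Pi.sub_apply]
            omega
          dsimp only
          simp [h1]
        · rintro ⟨γ, α⟩ hp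
          rw [Finset.mem_sigma] at hp
          have hle : ∀ i, α i ≤ γ i := (mem_decs.mp hp.2).1
          dsimp only
          set μ : Fin d → ℕ := γ - α with hμ
          have hg2 : γ = α + μ := by
            funext i
            have := hle i
            simp only [hμ, Pi.add_apply, Pi.sub_apply]
            omega
          rw [hg2, mono_add]
          have hc : ((mfact (α + μ) : ℕ) : ℂ)
              = (mchoose (α + μ) α : ℂ) * (mfact α : ℂ) * (mfact μ : ℂ) := by
            exact_mod_cast mfact_decomp α μ
          rw [hc]
          have hne1 : (mchoose (α + μ) α : ℂ) ≠ 0 := mchoose_ne_zero (fun i => by simp)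
          field_simp [mfact_ne_zero]
    _ = ∑ α ∈ midx d ω, mono α x / (mfact α : ℂ) * Vop (ω - morder α) w x * mpd α f 0 := by
        rw [Finset.sum_sigma]
        refine Finset.sum_congr rfl fun α _ => ?_
        dsimp only
        show _ = mono α x / (mfact α : ℂ)
          * (w x * ∑ μ ∈ midx d (ω - morder α), mono μ x / (mfact μ : ℂ)
              * mpd μ (fun y => (w y)⁻¹) 0) * mpd α f 0
        rw [Finset.mul_sum, Finset.mul_sum, Finset.sum_mul]
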